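/- Let l > 7 be a prime with l ≡ 6 (mod 7) and l ≡ 3 (mod 4). Then the degree-12 polynomial f₁₇₂₈(x) has exactly 6 roots in 𝔽_l, and each of these roots is a simple root of f₁₇₂₈ over 𝔽_l. -/
import Mathlib

set_option maxHeartbeats 2000000


open Polynomial

/-- The polynomial `f₁₇₂₈(x)`. -/
noncomputable def f1728poly (R : Type*) [CommRing R] : Polynomial R :=
  X ^ 12 - 18 * X ^ 11 + 117 * X ^ 10 - 354 * X ^ 9 + 570 * X ^ 8 - 486 * X ^ 7
    + 273 * X ^ 6 - 222 * X ^ 5 + 174 * X ^ 4 - 46 * X ^ 3 - 15 * X ^ 2 + 6 * X + 1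

section Aux

variable {K : Type*} [Field K]

/-- Monic quadratic `X^2 + p X + q`. -/
noncomputable def quadP (p q : K) : K[X] := X ^ 2 + C p * X + C q

lemma quadP_monic (p q : K) : (quadP p q).Monic := by
  have h : degree (C p * X + C q) < 2 :=
    lt_of_le_of_lt degree_linear_le (by norm_num)
  have := monic_X_pow_add (n := 2) (p := C p * X + C q) h
  simpa [quadP, add_assoc] using this

lemma quadP_ne_zero (p q : K) : quadP p q ≠ 0 := (quadP_monic p q).ne_zero

lemma quadP_roots_two (h2 : (2 : K) ≠ 0) {p q e : K} (hd : p ^ 2 - 4 * q = e ^ 2) :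
    Multiset.card (quadP p q).roots = 2 := by
  set u := (2 : K)⁻¹ with hu_def
  have hu : (2 : K) * u = 1 := mul_inv_cancel₀ h2
  have e1 : C ((-p + e) * u) + C ((-p - e) * u) = -C p := by
    rw [← C_add, show (-p + e) * u + (-p - e) * u = -p by linear_combination (-p) * hu, map_neg]
  have e2 : C ((-p + e) * u) * C ((-p - e) * u) = C q := by
    rw [← C_mul, show ((-p + e) * u) * ((-p - e) * u) = q by
      linear_combination (q * (2 * u + 1)) * hu + u ^ 2 * hd]
  have hfac : quadP p q = (X - C ((-p + e) * u)) * (X - C ((-p - e) * u)) := by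
    unfold quadP
    linear_combination X * e1 - e2
  rw [hfac, roots_mul (mul_ne_zero (X_sub_C_ne_zero _) (X_sub_C_ne_zero _)),
    roots_X_sub_C, roots_X_sub_C]
  simp

lemma quadP_roots_zero {p q : K} (hd : ¬ IsSquare (p ^ 2 - 4 * q)) :
    Multiset.card (quadP p q).roots = 0 := by
  rw [Multiset.card_eq_zero]
  apply Multiset.eq_zero_of_forall_notMem
  intro x hx
  rw [mem_roots (quadP_ne_zero p q)] at hx
  have hr : x ^ 2 + p * x + q = 0 := by
    simpa [quadP, IsRoot] using hx
  exact hd ⟨2 * x + p, by linear_combination (-4) * hr⟩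

lemma pair_card {K : Type*} [Field K] [Fintype K] [DecidableEq K] (h2 : (2 : K) ≠ 0)
    (hns : ¬ IsSquare (-1 : K)) {p1 q1 p2 q2 w : K} (hw : w ≠ 0)
    (hd : (p1 ^ 2 - 4 * q1) * (p2 ^ 2 - 4 * q2) = -w ^ 2) :
    Multiset.card (quadP p1 q1).roots + Multiset.card (quadP p2 q2).roots = 2 := by
  have hprod : (p1 ^ 2 - 4 * q1) * (p2 ^ 2 - 4 * q2) ≠ 0 := by
    rw [hd]
    exact neg_ne_zero.mpr (pow_ne_zero 2 hw)
  have hd1 : p1 ^ 2 - 4 * q1 ≠ 0 := left_ne_zero_of_mul hprod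
  have hd2 : p2 ^ 2 - 4 * q2 ≠ 0 := right_ne_zero_of_mul hprod
  have hχ : quadraticChar K (p1 ^ 2 - 4 * q1) * quadraticChar K (p2 ^ 2 - 4 * q2) = -1 := by
    rw [← map_mul, hd, show (-w ^ 2 : K) = (-1) * (w * w) by ring, map_mul, map_mul,
      quadraticChar_neg_one_iff_not_isSquare.mpr hns, ← sq, quadraticChar_sq_one hw]
    norm_num
  by_cases hs1 : IsSquare (p1 ^ 2 - 4 * q1)
  · have hχ1 : quadraticChar K (p1 ^ 2 - 4 * q1) = 1 :=
      (quadraticChar_one_iff_isSquare hd1).mpr hs1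
    have hχ2 : quadraticChar K (p2 ^ 2 - 4 * q2) = -1 := by
      rw [hχ1, one_mul] at hχ; exact hχ
    have hs2 : ¬ IsSquare (p2 ^ 2 - 4 * q2) :=
      quadraticChar_neg_one_iff_not_isSquare.mp hχ2
    obtain ⟨e, he⟩ := hs1
    rw [quadP_roots_two h2 (show p1 ^ 2 - 4 * q1 = e ^ 2 by rw [he]; ring),
      quadP_roots_zero hs2]
  · have hχ1 : quadraticChar K (p1 ^ 2 - 4 * q1) = -1 :=
      quadraticChar_neg_one_iff_not_isSquare.mpr hs1
    have hχ2 : quadraticChar K (p2 ^ 2 - 4 * q2) = 1 := by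
      rw [hχ1] at hχ; linarith
    have hs2 : IsSquare (p2 ^ 2 - 4 * q2) := (quadraticChar_one_iff_isSquare hd2).mp hχ2
    obtain ⟨e, he⟩ := hs2
    rw [quadP_roots_zero hs1, quadP_roots_two h2 (show p2 ^ 2 - 4 * q2 = e ^ 2 by rw [he]; ring)]

/-- The coefficient `p` of the quadratic factors. -/
def pco (c t : K) : K := -(4 - 2 * c - c ^ 2 + t * (9 - 2 * c - 3 * c ^ 2))

/-- The coefficient `q` of the quadratic factors. -/
def qco (c t : K) : K := 3 - c - c ^ 2 + t * (8 - c - 5 * c ^ 2)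

/-- The quadratic factor attached to `(c, t)`. -/
noncomputable def quadf (c t : K) : K[X] := quadP (pco c t) (qco c t)

/-- The sextic factor `g₊`. -/
noncomputable def gpol (t : K) : K[X] :=
  X ^ 6 - (9 + 14 * C t) * X ^ 5 + (32 + 70 * C t) * X ^ 4 - (29 + 70 * C t) * X ^ 3
    + 2 * X ^ 2 + (3 + 14 * C t) * X + 1

lemma factA (t : K) (ht : 7 * t ^ 2 = 1) : f1728poly K = gpol t * gpol (-t) := by
  have ht' : 7 * (C t) ^ 2 = (1 : K[X]) := by
    have h := congrArg (Polynomial.C (R := K)) ht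
    simpa only [map_mul, map_pow, map_ofNat, map_one] using h
  unfold f1728poly gpol
  simp only [map_neg]
  linear_combination ((28) * X ^ 10 + (-280) * X ^ 9 + (980) * X ^ 8 + (-1400) * X ^ 7 + (644) * X ^ 6 + (280) * X ^ 5 + (-280) * X ^ 4 + (28) * X ^ 2) * ht'

lemma factB (c t : K) (hc : c ^ 3 + c ^ 2 - 2 * c - 1 = 0) (ht : 7 * t ^ 2 = 1) :
    gpol t = quadf c t * quadf (c ^ 2 - 2) t * quadf (1 - c - c ^ 2) t := by
  have hc' : (C c) ^ 3 + (C c) ^ 2 - 2 * (C c) - 1 = (0 : K[X]) := by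
    have h := congrArg (Polynomial.C (R := K)) hc
    simpa only [map_add, map_sub, map_mul, map_pow, map_ofNat, map_one, map_zero] using h
  have ht' : 7 * (C t) ^ 2 = (1 : K[X]) := by
    have h := congrArg (Polynomial.C (R := K)) ht
    simpa only [map_mul, map_pow, map_ofNat, map_one] using h
  unfold gpol quadf quadP pco qco
  simp only [map_add, map_sub, map_mul, map_pow, map_neg, map_ofNat, map_one]
  linear_combination ((-6) * X ^ 5 * (C c) * (C t) + (-2) * X ^ 5 * (C c) + (-9) * X ^ 4 * (C c) ^ 5 * (C t) ^ 2 + (-6) * X ^ 4 * (C c) ^ 5 * (C t) - X ^ 4 * (C c) ^ 5 + (-9) * X ^ 4 * (C c) ^ 4 * (C t) ^ 2 + (-6) * X ^ 4 * (C c) ^ 4 * (C t) - X ^ 4 * (C c) ^ 4 + (18) * X ^ 4 * (C c) ^ 3 * (C t) ^ 2 + (12) * X ^ 4 * (C c) ^ 3 * (C t) + (2) * X ^ 4 * (C c) ^ 3 + (9) * X ^ 4 * (C c) ^ 2 * (C t) ^ 2 + (-6) * X ^ 4 * (C c) ^ 2 * (C t) + (-3) * X ^ 4 * (C c) ^ 2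 + (70) * X ^ 4 * (C c) * (C t) ^ 2 + (70) * X ^ 4 * (C c) * (C t) + (16) * X ^ 4 * (C c) + (12) * X ^ 4 * (C t) + (4) * X ^ 4 + (-27) * X ^ 3 * (C c) ^ 7 * (C t) ^ 3 + (-27) * X ^ 3 * (C c) ^ 7 * (C t) ^ 2 + (-9) * X ^ 3 * (C c) ^ 7 * (C t) - X ^ 3 * (C c) ^ 7 + (-45) * X ^ 3 * (C c) ^ 6 * (C t) ^ 3 + (-57) * X ^ 3 * (C c) ^ 6 * (C t) ^ 2 + (-23) * X ^ 3 * (C c) ^ 6 * (C t) + (-3) * X ^ 3 * (C c) ^ 6 + (171) * X ^ 3 * (C c) ^ 5 * (C t) ^ 3 + (198) * X ^ 3 * (C c) ^ 5 * (C t) ^ 2 + (71) * X ^ 3 * (C c) ^ 5 * (C t) + (8) * X ^ 3 * (C c) ^ 5 + (216) * X ^ 3 * (C c) ^ 4 * (C t) ^ 3 + (291) * X ^ 3 * (C c) ^ 4 * (C t) ^ 2 + (118) * X ^ 3 * (C c) ^ 4 * (C t) + (15) * X ^ 3 * (C c) ^ 4 + (-261) * X ^ 3 * (C c) ^ 3 *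 (C t) ^ 3 + (-315) * X ^ 3 * (C c) ^ 3 * (C t) ^ 2 + (-115) * X ^ 3 * (C c) ^ 3 * (C t) + (-13) * X ^ 3 * (C c) ^ 3 + (-184) * X ^ 3 * (C c) ^ 2 * (C t) ^ 3 + (-184) * X ^ 3 * (C c) ^ 2 * (C t) ^ 2 + (-10) * X ^ 3 * (C c) ^ 2 * (C t) + (10) * X ^ 3 * (C c) ^ 2 + (-90) * X ^ 3 * (C c) * (C t) ^ 3 + (-319) * X ^ 3 * (C c) * (C t) ^ 2 + (-220) * X ^ 3 * (C c) * (C t) + (-43) * X ^ 3 * (C c) + (13) * X ^ 3 * (C t) ^ 3 + (-50) * X ^ 3 * (C t) ^ 2 + (-85) * X ^ 3 * (C t) + (-22) * X ^ 3 + (135) * X ^ 2 * (C c) ^ 7 * (C t) ^ 3 + (117) * X ^ 2 * (C c) ^ 7 * (C t) ^ 2 + (33) * X ^ 2 * (C c) ^ 7 * (C t) + (3) * X ^ 2 * (C c) ^ 7 + (204) * X ^ 2 * (C c) ^ 6 * (C t) ^ 3 + (224) * X ^ 2 * (C c) ^ 6 * (C t) ^ 2 + (76) * X ^ 2 * (C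 c) ^ 6 * (C t) + (8) * X ^ 2 * (C c) ^ 6 + (-813) * X ^ 2 * (C c) ^ 5 * (C t) ^ 3 + (-725) * X ^ 2 * (C c) ^ 5 * (C t) ^ 2 + (-207) * X ^ 2 * (C c) ^ 5 * (C t) + (-19) * X ^ 2 * (C c) ^ 5 + (-954) * X ^ 2 * (C c) ^ 4 * (C t) ^ 3 + (-1036) * X ^ 2 * (C c) ^ 4 * (C t) ^ 2 + (-346) * X ^ 2 * (C c) ^ 4 * (C t) + (-36) * X ^ 2 * (C c) ^ 4 + (1221) * X ^ 2 * (C c) ^ 3 * (C t) ^ 3 + (1099) * X ^ 2 * (C c) ^ 3 * (C t) ^ 2 + (315) * X ^ 2 * (C c) ^ 3 * (C t) + (29) * X ^ 2 * (C c) ^ 3 + (962) * X ^ 2 * (C c) ^ 2 * (C t) ^ 3 + (824) * X ^ 2 * (C c) ^ 2 * (C t) ^ 2 + (160) * X ^ 2 * (C c) ^ 2 * (C t) + (-2) * X ^ 2 * (C c) ^ 2 + (-61) * X ^ 2 * (C c) * (C t) ^ 3 + (230) * X ^ 2 * (C c) * (C t) ^ 2 + (227) * X ^ 2 * (C c) *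 (C t) + (48) * X ^ 2 * (C c) + (-212) * X ^ 2 * (C t) ^ 3 + (-12) * X ^ 2 * (C t) ^ 2 + (110) * X ^ 2 * (C t) + (30) * X ^ 2 + (-225) * X * (C c) ^ 7 * (C t) ^ 3 + (-165) * X * (C c) ^ 7 * (C t) ^ 2 + (-39) * X * (C c) ^ 7 * (C t) + (-3) * X * (C c) ^ 7 + (-305) * X * (C c) ^ 6 * (C t) ^ 3 + (-281) * X * (C c) ^ 6 * (C t) ^ 2 + (-79) * X * (C c) ^ 6 * (C t) + (-7) * X * (C c) ^ 6 + (1285) * X * (C c) ^ 5 * (C t) ^ 3 + (952) * X * (C c) ^ 5 * (C t) ^ 2 + (229) * X * (C c) ^ 5 * (C t) + (18) * X * (C c) ^ 5 + (1380) * X * (C c) ^ 4 * (C t) ^ 3 + (1251) * X * (C c) ^ 4 * (C t) ^ 2 + (350) * X * (C c) ^ 4 * (C t) + (31) * X * (C c) ^ 4 + (-1895) * X * (C c) ^ 3 * (C t) ^ 3 + (-1409) * X * (C c) ^ 3 * (C t) ^ 2 + (-341) * X * (C c) ^ 3 * (C t) + (-27) * X * (C c) ^ 3 + (-1510) * X *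 (C c) ^ 2 * (C t) ^ 3 + (-1163) * X * (C c) ^ 2 * (C t) ^ 2 + (-238) * X * (C c) ^ 2 * (C t) + (-9) * X * (C c) ^ 2 + (594) * X * (C c) * (C t) ^ 3 + (221) * X * (C c) * (C t) ^ 2 + (-64) * X * (C c) * (C t) + (-23) * X * (C c) + (435) * X * (C t) ^ 3 + (193) * X * (C t) ^ 2 + (-33) * X * (C t) + (-15) * X + (125) * (C c) ^ 7 * (C t) ^ 3 + (75) * (C c) ^ 7 * (C t) ^ 2 + (15) * (C c) ^ 7 * (C t) + (C c) ^ 7 + (150) * (C c) ^ 6 * (C t) ^ 3 + (110) * (C c) ^ 6 * (C t) ^ 2 + (26) * (C c) ^ 6 * (C t) + (2) * (C c) ^ 6 + (-675) * (C c) ^ 5 * (C t) ^ 3 + (-420) * (C c) ^ 5 * (C t) ^ 2 + (-87) * (C c) ^ 5 * (C t) + (-6) * (C c) ^ 5 + (-650) * (C c) ^ 4 * (C t) ^ 3 + (-485) * (C c) ^ 4 * (C t) ^ 2 + (-116) * (C c) ^ 4 * (C t) + (-9) * (C c) ^ 4 + (975) * (C c) ^ 3 * (C t) ^ 3 + (615)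 * (C c) ^ 3 * (C t) ^ 2 + (129) * (C c) ^ 3 * (C t) + (9) * (C c) ^ 3 + (709) * (C c) ^ 2 * (C t) ^ 3 + (499) * (C c) ^ 2 * (C t) ^ 2 + (99) * (C c) ^ 2 * (C t) + (5) * (C c) ^ 2 + (-442) * (C c) * (C t) ^ 3 + (-206) * (C c) * (C t) ^ 2 + (-8) * (C c) * (C t) + (4) * (C c) + (-209) * (C t) ^ 3 + (-124) * (C t) ^ 2 + (-9) * (C t) + (2)) * hc' + ((-7) * X ^ 4 + (7) * X ^ 3 * (C t) + (7) * X ^ 3 + (14) * X ^ 2 * (C t) + (7) * X ^ 2 + (-7) * X * (C t) + (-7) * X + (-7) * (C t)) * ht'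

lemma discRel (c t : K) (hc : c ^ 3 + c ^ 2 - 2 * c - 1 = 0) (ht : 7 * t ^ 2 = 1) :
    (pco c t ^ 2 - 4 * qco c t) * (pco c (-t) ^ 2 - 4 * qco c (-t))
      = -(t * (15 + 6 * c - 12 * c ^ 2)) ^ 2 := by
  unfold pco qco
  linear_combination ((81) * c ^ 5 * t ^ 4 + (-18) * c ^ 5 * t ^ 2 + c ^ 5 + (135) * c ^ 4 * t ^ 4 + (-78) * c ^ 4 * t ^ 2 + (7) * c ^ 4 + (-729) * c ^ 3 * t ^ 4 + (-50) * c ^ 3 * t ^ 2 + (11) * c ^ 3 + (-768) * c ^ 2 * t ^ 4 + (212) * c ^ 2 * t ^ 2 + (-20) * c ^ 2 + (2539) * c * t ^ 4 + (272) * c * t ^ 2 + (-39) * c + (740) * t ^ 4 + (-722) * t ^ 2 + (42)) * hc + ((-462) * c ^ 2 * t ^ 2 + (-4) * c ^ 2 + (-259) * c * t ^ 2 + (51) * c + (1043) * t ^ 2 + (-58)) * ht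

lemma wUnit (c t i3 : K) (hc : c ^ 3 + c ^ 2 - 2 * c - 1 = 0) (ht : 7 * t ^ 2 = 1)
    (h3 : 3 * i3 = 1) :
    (t * (15 + 6 * c - 12 * c ^ 2)) * (t * (3 + 2 * c) * i3) = 1 := by
  linear_combination ((-24) * t ^ 2 * i3) * hc + (3 * i3) * ht + h3

lemma cub2 {c : K} (hc : c ^ 3 + c ^ 2 - 2 * c - 1 = 0) :
    (c ^ 2 - 2) ^ 3 + (c ^ 2 - 2) ^ 2 - 2 * (c ^ 2 - 2) - 1 = 0 := by
  linear_combination (c ^ 3 - c ^ 2 - 2 * c + 1) * hc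

lemma cub3 {c : K} (hc : c ^ 3 + c ^ 2 - 2 * c - 1 = 0) :
    (1 - c - c ^ 2) ^ 3 + (1 - c - c ^ 2) ^ 2 - 2 * (1 - c - c ^ 2) - 1 = 0 := by
  linear_combination (-c ^ 3 - 2 * c ^ 2 + c + 1) * hc

/-- Existence of a root of `x^3 + x^2 - 2x - 1` in `ZMod l` for a prime `l ≡ 6 (mod 7)`. -/
lemma exists_cubic_root (l : ℕ) [Fact (Nat.Prime l)] (h7 : l % 7 = 6) :
    ∃ c : ZMod l, c ^ 3 + c ^ 2 - 2 * c - 1 = 0 := by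
  haveI : NeZero l := ⟨(Fact.out : l.Prime).pos.ne'⟩
  set K := GaloisField l 2 with hK
  haveI : Fintype K := Fintype.ofFinite K
  haveI : DecidableEq K := Classical.decEq K
  haveI : Fact (Nat.Prime 7) := ⟨by norm_num⟩
  have hcardK : Fintype.card K = l ^ 2 := by
    rw [← Nat.card_eq_fintype_card]
    exact GaloisField.card l 2 (by norm_num)
  have h7dvd : 7 ∣ Fintype.card Kˣ := by
    rw [Fintype.card_units, hcardK]
    obtain ⟨k, hk⟩ : ∃ k, l = 7 * k + 6 := ⟨l / 7, by omega⟩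
    have hsq : l ^ 2 = 7 * (7 * k ^ 2 + 12 * k + 5) + 1 := by rw [hk]; ring
    omega
  obtain ⟨ζ, hord⟩ := exists_prime_orderOf_dvd_card 7 h7dvd
  set z : K := ((ζ : Kˣ) : K) with hz_def
  have hz7 : z ^ 7 = 1 := by
    have h := pow_orderOf_eq_one ζ
    rw [hord] at h
    have := congrArg (Units.val) h
    simpa using this
  have hz1 : z ≠ 1 := by
    intro h
    have hζ : ζ = 1 := Units.val_eq_one.mp h
    rw [hζ, orderOf_one] at hord
    norm_num at hord
  set e : K := z + z ^ 6 with he_def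
  have hsum : 1 + z + z ^ 2 + z ^ 3 + z ^ 4 + z ^ 5 + z ^ 6 = 0 := by
    have h0 : (z - 1) * (1 + z + z ^ 2 + z ^ 3 + z ^ 4 + z ^ 5 + z ^ 6) = 0 := by
      linear_combination hz7
    rcases mul_eq_zero.mp h0 with h | h
    · exact absurd (sub_eq_zero.mp h) hz1
    · exact h
  have hecube : e ^ 3 + e ^ 2 - 2 * e - 1 = 0 := by
    rw [he_def]
    linear_combination (z ^ 11 + 3 * z ^ 6 + z ^ 5 + z ^ 4 + 3 * z + 2) * hz7 + hsum
  have hel : e ^ l = e := by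
    obtain ⟨k, hk⟩ : ∃ k, l = 7 * k + 6 := ⟨l / 7, by omega⟩
    have hzl : z ^ l = z ^ 6 := by
      have h1 : z ^ l = z ^ (7 * k + 6) := congrArg (fun n => z ^ n) hk
      rw [h1, pow_add, pow_mul, hz7, one_pow, one_mul]
    have hz6l : (z ^ 6) ^ l = z := by
      rw [← pow_mul, show 6 * l = 7 * (6 * k + 5) + 1 by omega, pow_add, pow_mul, hz7,
        one_pow, pow_one, one_mul]
    rw [he_def, add_pow_char, hzl, hz6l, add_comm]
  -- every element fixed by `x ↦ x^l` lies in the image of `ZMod l`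
  have hrange : ∃ y : ZMod l, algebraMap (ZMod l) K y = e := by
    by_contra hno
    push_neg at hno
    set P : K[X] := X ^ l - X with hP
    have hllt : 1 < l := (Fact.out : l.Prime).one_lt
    have hdeg : P.natDegree = l := by
      rw [hP, natDegree_sub_eq_left_of_natDegree_lt, natDegree_X_pow]
      rw [natDegree_X, natDegree_X_pow]; omega
    have hP0 : P ≠ 0 := by
      intro h
      rw [h, natDegree_zero] at hdeg
      omega
    set T : Finset K := insert e (Finset.univ.image (algebraMap (ZMod l) K)) with hT
    have hsub : T ⊆ P.roots.toFinset := by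
      intro a ha
      rw [Multiset.mem_toFinset, mem_roots hP0]
      rcases Finset.mem_insert.mp ha with rfl | hmem
      · simp [hP, IsRoot, hel]
      · obtain ⟨y, _, rfl⟩ := Finset.mem_image.mp hmem
        simp only [hP, IsRoot, eval_sub, eval_pow, eval_X]
        rw [← map_pow, ZMod.pow_card, sub_self]
    have hTcard : T.card = l + 1 := by
      rw [hT, Finset.card_insert_of_notMem, Finset.card_image_of_injective _
        (algebraMap (ZMod l) K).injective, Finset.card_univ, ZMod.card]
      intro hmem
      obtain ⟨y, _, hy⟩ := Finset.mem_image.mp hmem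
      exact hno y hy
    have hchain : T.card ≤ l := by
      calc T.card ≤ P.roots.toFinset.card := Finset.card_le_card hsub
        _ ≤ Multiset.card P.roots := Multiset.toFinset_card_le _
        _ ≤ P.natDegree := card_roots' P
        _ = l := hdeg
    omega
  obtain ⟨y, hy⟩ := hrange
  refine ⟨y, (algebraMap (ZMod l) K).injective ?_⟩
  rw [map_zero, map_sub, map_sub, map_add, map_pow, map_pow, map_mul, map_ofNat, map_one, hy,
    hecube]

end Aux

/-- Proposition 2(b): for a prime `l > 7` with `l ≡ 6 (mod 7)` and `l ≡ 3 (mod 4)`,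
the polynomial `f₁₇₂₈` has exactly `6` roots in `𝔽_l`, each of which is simple. -/
theorem f1728_six_simple_roots (l : ℕ) [Fact (Nat.Prime l)] (hl : 7 < l)
    (h7 : l % 7 = 6) (h4 : l % 4 = 3) :
    (f1728poly (ZMod l)).roots.toFinset.card = 6 ∧
      ∀ x : ZMod l, (f1728poly (ZMod l)).IsRoot x →
        (f1728poly (ZMod l)).rootMultiplicity x = 1 := by
  haveI : NeZero l := ⟨(Fact.out : l.Prime).pos.ne'⟩
  have hlp : l.Prime := Fact.out
  -- small numbers are nonzero in `ZMod l`
  have hnz : ∀ n : ℕ, 0 < n → n < l → ((n : ℕ) : ZMod l) ≠ 0 := by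
    intro n hn hnl h
    rw [ZMod.natCast_eq_zero_iff] at h
    exact absurd (Nat.le_of_dvd hn h) (by omega)
  have h2K : (2 : ZMod l) ≠ 0 := by
    have := hnz 2 (by norm_num) (by omega); simpa using this
  have h3K : (3 : ZMod l) ≠ 0 := by
    have := hnz 3 (by norm_num) (by omega); simpa using this
  have h7K : (7 : ZMod l) ≠ 0 := by
    have := hnz 7 (by norm_num) (by omega); simpa using this
  have h6048K : (6048 : ZMod l) ≠ 0 := by
    have : (6048 : ZMod l) = 2 ^ 5 * 3 ^ 3 * 7 := by norm_num
    rw [this]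
    exact mul_ne_zero (mul_ne_zero (pow_ne_zero _ h2K) (pow_ne_zero _ h3K)) h7K
  -- -1 is not a square
  have hns : ¬ IsSquare (-1 : ZMod l) := by
    rw [ZMod.exists_sq_eq_neg_one_iff]
    simp [h4]
  -- 7 is a square
  haveI : Fact (Nat.Prime 7) := ⟨by norm_num⟩
  have hsq7 : IsSquare (7 : ZMod l) := by
    have hl2 : l ≠ 2 := by omega
    have hrec : legendreSym l 7 = - legendreSym 7 l :=
      legendreSym.quadratic_reciprocity_three_mod_four (by norm_num) h4
    have h7l : legendreSym 7 (l : ℤ) = -1 := by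
      have hstep : legendreSym 7 (l : ℤ) = legendreSym 7 (-1 : ℤ) := by
        rw [legendreSym.mod 7 (l : ℤ), legendreSym.mod 7 (-1 : ℤ)]
        congr 1
        omega
      rw [hstep, legendreSym.at_neg_one (by norm_num), ZMod.χ₄_nat_three_mod_four (by norm_num)]
    have h1 : legendreSym l 7 = 1 := by rw [hrec, h7l]; norm_num
    have := (legendreSym.eq_one_iff l (a := 7) (by
      norm_num
      exact h7K)).mp h1
    simpa using this
  obtain ⟨s, hs⟩ := hsq7
  have hs0 : s ≠ 0 := by
    intro h
    rw [h, mul_zero] at hs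
    exact h7K hs
  set t : ZMod l := s⁻¹ with ht_def
  have ht : 7 * t ^ 2 = 1 := by
    rw [ht_def, hs]
    field_simp
  have htneg : 7 * (-t) ^ 2 = 1 := by linear_combination ht
  -- the root of the cubic
  obtain ⟨c, hc⟩ := exists_cubic_root l h7
  have h3i : 3 * (3 : ZMod l)⁻¹ = 1 := mul_inv_cancel₀ h3K
  set i3 : ZMod l := (3 : ZMod l)⁻¹
  -- factorization of f1728poly into six quadratics
  have hfac : f1728poly (ZMod l)
      = quadf c t * quadf (c ^ 2 - 2) t * quadf (1 - c - c ^ 2) t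
        * (quadf c (-t) * quadf (c ^ 2 - 2) (-t) * quadf (1 - c - c ^ 2) (-t)) := by
    rw [factA t ht, factB c t hc ht, factB c (-t) hc htneg]
  -- separability via a Bezout certificate
  have hder : derivative (f1728poly (ZMod l))
      = 12 * X ^ 11 - 198 * X ^ 10 + 1170 * X ^ 9 - 3186 * X ^ 8 + 4560 * X ^ 7
        - 3402 * X ^ 6 + 1638 * X ^ 5 - 1110 * X ^ 4 + 696 * X ^ 3 - 138 * X ^ 2
        - 30 * X + 6 := by
    unfold f1728poly
    simp only [derivative_add, derivative_sub, derivative_mul, derivative_ofNat,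
      derivative_X_pow, derivative_X, derivative_one, map_natCast, map_ofNat, map_one,
      Nat.cast_ofNat, Nat.cast_one]
    ring
  have hbez : ((-255696 * X ^ 10 + 4012320 * X ^ 9 - 21695244 * X ^ 8 + 50476188 * X ^ 7 - 57052002 * X ^ 6 + 28040334 * X ^ 5 - 14270592 * X ^ 4 + 13316814 * X ^ 3 - 4693104 * X ^ 2 - 344334 * X + 129654 : (ZMod l)[X])) * f1728poly (ZMod l)
      + ((21308 * X ^ 11 - 366322 * X ^ 10 + 2197610 * X ^ 9 - 5778133 * X ^ 8 + 7544544 * X ^ 7 - 4446540 * X ^ 6 + 2486526 * X ^ 5 - 2901227 * X ^ 4 + 1467720 * X ^ 3 + 100480 * X ^ 2 - 175270 * X - 20601 : (ZMod l)[X])) * derivative (f1728poly (ZMod l)) = C (6048 : ZMod l) := by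
    rw [hder, show (C (6048 : ZMod l)) = (6048 : (ZMod l)[X]) from map_ofNat _ 6048]
    unfold f1728poly
    ring
  have hsep : (f1728poly (ZMod l)).Separable := by
    refine ⟨C (6048 : ZMod l)⁻¹ * ((-255696 * X ^ 10 + 4012320 * X ^ 9 - 21695244 * X ^ 8 + 50476188 * X ^ 7 - 57052002 * X ^ 6 + 28040334 * X ^ 5 - 14270592 * X ^ 4 + 13316814 * X ^ 3 - 4693104 * X ^ 2 - 344334 * X + 129654 : (ZMod l)[X])), C (6048 : ZMod l)⁻¹ * ((21308 * X ^ 11 - 366322 * X ^ 10 + 2197610 * X ^ 9 - 5778133 * X ^ 8 + 7544544 * X ^ 7 - 4446540 * X ^ 6 + 2486526 * X ^ 5 - 2901227 * X ^ 4 + 1467720 * X ^ 3 + 100480 * X ^ 2 - 175270 * X - 20601 : (ZMod l)[X])), ?_⟩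
    have hrw : C (6048 : ZMod l)⁻¹ * ((-255696 * X ^ 10 + 4012320 * X ^ 9 - 21695244 * X ^ 8 + 50476188 * X ^ 7 - 57052002 * X ^ 6 + 28040334 * X ^ 5 - 14270592 * X ^ 4 + 13316814 * X ^ 3 - 4693104 * X ^ 2 - 344334 * X + 129654 : (ZMod l)[X])) * f1728poly (ZMod l)
        + C (6048 : ZMod l)⁻¹ * ((21308 * X ^ 11 - 366322 * X ^ 10 + 2197610 * X ^ 9 - 5778133 * X ^ 8 + 7544544 * X ^ 7 - 4446540 * X ^ 6 + 2486526 * X ^ 5 - 2901227 * X ^ 4 + 1467720 * X ^ 3 + 100480 * X ^ 2 - 175270 * X - 20601 : (ZMod l)[X])) * derivative (f1728poly (ZMod l))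
        = C (6048 : ZMod l)⁻¹ * (((-255696 * X ^ 10 + 4012320 * X ^ 9 - 21695244 * X ^ 8 + 50476188 * X ^ 7 - 57052002 * X ^ 6 + 28040334 * X ^ 5 - 14270592 * X ^ 4 + 13316814 * X ^ 3 - 4693104 * X ^ 2 - 344334 * X + 129654 : (ZMod l)[X])) * f1728poly (ZMod l)
          + ((21308 * X ^ 11 - 366322 * X ^ 10 + 2197610 * X ^ 9 - 5778133 * X ^ 8 + 7544544 * X ^ 7 - 4446540 * X ^ 6 + 2486526 * X ^ 5 - 2901227 * X ^ 4 + 1467720 * X ^ 3 + 100480 * X ^ 2 - 175270 * X - 20601 : (ZMod l)[X])) * derivative (f1728poly (ZMod l))) := by ring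
    rw [hrw, hbez, ← C_mul, inv_mul_cancel₀ h6048K, C_1]
  have hnodup : (f1728poly (ZMod l)).roots.Nodup := nodup_roots hsep
  -- counting roots of the quadratic pairs
  have hpair : ∀ a : ZMod l, a ^ 3 + a ^ 2 - 2 * a - 1 = 0 →
      Multiset.card (quadf a t).roots + Multiset.card (quadf a (-t)).roots = 2 := by
    intro a ha
    have hw : (t * (15 + 6 * a - 12 * a ^ 2)) ≠ 0 :=
      left_ne_zero_of_mul_eq_one (wUnit a t i3 ha ht h3i)
    exact pair_card h2K hns hw (discRel a t ha ht)
  have P1 := hpair c hc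
  have P2 := hpair (c ^ 2 - 2) (cub2 hc)
  have P3 := hpair (1 - c - c ^ 2) (cub3 hc)
  -- total multiset of roots
  have hQ : ∀ (a b : ZMod l), quadf a b ≠ 0 := fun a b => quadP_ne_zero _ _
  have hf0 : f1728poly (ZMod l) ≠ 0 := by
    rw [hfac]
    exact mul_ne_zero (mul_ne_zero (mul_ne_zero (hQ _ _) (hQ _ _)) (hQ _ _))
      (mul_ne_zero (mul_ne_zero (hQ _ _) (hQ _ _)) (hQ _ _))
  have hcard : Multiset.card (f1728poly (ZMod l)).roots = 6 := by
    rw [hfac, roots_mul (mul_ne_zero (mul_ne_zero (mul_ne_zero (hQ _ _) (hQ _ _)) (hQ _ _))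
        (mul_ne_zero (mul_ne_zero (hQ _ _) (hQ _ _)) (hQ _ _))),
      roots_mul (mul_ne_zero (mul_ne_zero (hQ _ _) (hQ _ _)) (hQ _ _)),
      roots_mul (mul_ne_zero (hQ _ _) (hQ _ _)),
      roots_mul (mul_ne_zero (mul_ne_zero (hQ _ _) (hQ _ _)) (hQ _ _)),
      roots_mul (mul_ne_zero (hQ _ _) (hQ _ _))]
    simp only [Multiset.card_add]
    omega
  constructor
  · rw [Multiset.toFinset_card_of_nodup hnodup, hcard]
  · intro x hx
    have h1 : 0 < rootMultiplicity x (f1728poly (ZMod l)) :=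
      (rootMultiplicity_pos hf0).mpr hx
    have hle : rootMultiplicity x (f1728poly (ZMod l)) ≤ 1 := by
      rw [← count_roots]
      exact (Multiset.nodup_iff_count_le_one.mp hnodup) x
    omega
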